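/- For a Hilbert space X, the n-th polarization constant localizes to subspaces of dimension at most n: c_n(X) = sup { c_n(Y) : Y a closed subspace of X with dim Y ≤ n }. -/

import Mathlib

/-!
Write `S(Z)` (`unitSupNormProds 𝕜 Z n`) for the set of values `sup_{‖x‖≤1} |∏ⱼ fⱼ(x)|` over
unit-norm tuples, so that `cₙ(Z) = (inf S(Z))⁻¹`. For a closed subspace `Y` of `X`, composing with
the orthogonal projection onto `Y` extends norm-one functionals on `Y` to norm-one functionals on
`X` without changing the supremum, so `S(Y) ⊆ S(X)` and `cₙ(Y) ≤ cₙ(X)`. Conversely, a tuple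
`f₁,…,fₙ` on `X` factors through the projection onto the span `Y` of its Riesz representatives, so
every value of `S(X)` already lies in `S(Y)` with `dim Y ≤ n`. In finite dimensions the unit tuples
form a compact set on which the supremum is continuous and positive, so `inf S(Y) > 0`; this rules
out the junk value `0⁻¹ = 0` and makes the supremum of the `cₙ(Y)` equal to `(inf S(X))⁻¹`.
-/

open scoped BigOperators

/-- `sup_{‖x‖≤1} |∏ⱼ fⱼ(x)|` for functionals `f₁,…,fₙ`. -/
noncomputable def supNormProd {𝕜 X : Type*} [RCLike 𝕜] [NormedAddCommGroup X]
    [NormedSpace 𝕜 X] {n : ℕ} (f : Fin n → (X →L[𝕜] 𝕜)) : ℝ :=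
  sSup {t : ℝ | ∃ x : X, ‖x‖ ≤ 1 ∧ t = ‖∏ j, f j x‖}

/-- The n-th linear polarization constant
`cₙ(X) = 1 / inf_{f₁,…,fₙ ∈ S_{X*}} sup_{‖x‖≤1} |∏ⱼ fⱼ(x)|`. -/
noncomputable def polarizationConst (𝕜 X : Type*) [RCLike 𝕜] [NormedAddCommGroup X]
    [NormedSpace 𝕜 X] (n : ℕ) : ℝ :=
  (sInf {y : ℝ | ∃ f : Fin n → (X →L[𝕜] 𝕜), (∀ j, ‖f j‖ = 1) ∧ y = supNormProd f})⁻¹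

open Set

lemma inv_sInf_eq_sSup_inv_sInf {ι : Type*} {S : Set ℝ} {s : ι → Set ℝ} {p : ι → Prop}
    (hsub : ∀ i, p i → s i ⊆ S)
    (hcover : ∀ x ∈ S, ∃ i, p i ∧ 0 < sInf (s i) ∧ sInf (s i) ≤ x) :
    (sInf S)⁻¹ = sSup {c | ∃ i, p i ∧ c = (sInf (s i))⁻¹} := by
  set T := {c | ∃ i, p i ∧ c = (sInf (s i))⁻¹}
  have hS_pos : ∀ x ∈ S, 0 < x := fun x hx ↦ by
    obtain ⟨i, -, hpos, hle⟩ := hcover x hx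
    exact hpos.trans_le hle
  have hT_ge : ∀ x ∈ S, ∃ c ∈ T, x⁻¹ ≤ c := fun x hx ↦ by
    obtain ⟨i, hi, hpos, hle⟩ := hcover x hx
    exact ⟨_, ⟨i, hi, rfl⟩, inv_anti₀ hpos hle⟩
  rcases S.eq_empty_or_nonempty with rfl | hne
  · have hT_zero : ∀ c ∈ T, c = 0 := by
      rintro c ⟨i, hi, rfl⟩
      rw [subset_empty_iff.1 (hsub i hi), Real.sInf_empty, inv_zero]
    rw [Real.sInf_empty, inv_zero]
    exact le_antisymm (Real.sSup_nonneg fun c hc ↦ (hT_zero c hc).ge)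
      (Real.sSup_nonpos fun c hc ↦ (hT_zero c hc).le)
  rcases (le_csInf hne fun x hx ↦ (hS_pos x hx).le).eq_or_lt with hA | hA
  · rw [← hA, inv_zero, Real.sSup_of_not_bddAbove]
    rintro ⟨M, hM⟩
    have hM' : 0 < max M 1 := lt_max_of_lt_right one_pos
    obtain ⟨x, hx, hxM⟩ := exists_lt_of_csInf_lt hne (hA ▸ inv_pos.2 hM' : sInf S < (max M 1)⁻¹)
    obtain ⟨c, hc, hxc⟩ := hT_ge x hx
    have := (lt_inv_comm₀ (hS_pos x hx) hM').1 hxM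
    linarith [hM hc, le_max_left M 1]
  · have hT_le : ∀ c ∈ T, c ≤ (sInf S)⁻¹ := by
      rintro c ⟨i, hi, rfl⟩
      rcases (s i).eq_empty_or_nonempty with h | h
      · rw [h, Real.sInf_empty, inv_zero]
        positivity
      · exact inv_anti₀ hA (csInf_le_csInf ⟨0, fun x hx ↦ (hS_pos x hx).le⟩ h (hsub i hi))
    obtain ⟨x₀, hx₀⟩ := hne
    obtain ⟨c₀, hc₀, hxc₀⟩ := hT_ge x₀ hx₀
    have hT_pos : 0 < sSup T :=
      (inv_pos.2 (hS_pos x₀ hx₀)).trans_le (le_csSup_of_le ⟨_, hT_le⟩ hc₀ hxc₀)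
    refine le_antisymm ((inv_le_comm₀ hA hT_pos).2 (le_csInf ⟨x₀, hx₀⟩ fun x hx ↦ ?_))
      (csSup_le ⟨c₀, hc₀⟩ hT_le)
    obtain ⟨c, hc, hxc⟩ := hT_ge x hx
    exact (inv_le_comm₀ (hS_pos x hx) hT_pos).1 (le_csSup_of_le ⟨_, hT_le⟩ hc hxc)

section NormedSpace

variable {𝕜 E F : Type*} [RCLike 𝕜] [NormedAddCommGroup E] [NormedSpace 𝕜 E]
  [NormedAddCommGroup F] [NormedSpace 𝕜 F] {n : ℕ}

variable (𝕜 E n) in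
def unitSupNormProds : Set ℝ :=
  {y : ℝ | ∃ f : Fin n → (E →L[𝕜] 𝕜), (∀ j, ‖f j‖ = 1) ∧ y = supNormProd f}

lemma polarizationConst_eq_inv_sInf :
    polarizationConst 𝕜 E n = (sInf (unitSupNormProds 𝕜 E n))⁻¹ :=
  rfl

lemma bddAbove_supNormProd_set (f : Fin n → (E →L[𝕜] 𝕜)) :
    BddAbove {t : ℝ | ∃ x : E, ‖x‖ ≤ 1 ∧ t = ‖∏ j, f j x‖} := by
  refine ⟨∏ j, ‖f j‖, ?_⟩
  rintro t ⟨x, hx, rfl⟩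
  rw [norm_prod]
  exact Finset.prod_le_prod (fun j _ ↦ norm_nonneg _) fun j _ ↦
    (f j).le_of_opNorm_le_of_le le_rfl hx |>.trans_eq (mul_one _)

lemma norm_prod_apply_le_supNormProd (f : Fin n → (E →L[𝕜] 𝕜)) {x : E} (hx : ‖x‖ ≤ 1) :
    ‖∏ j, f j x‖ ≤ supNormProd f :=
  le_csSup (bddAbove_supNormProd_set f) ⟨x, hx, rfl⟩

lemma supNormProd_nonneg (f : Fin n → (E →L[𝕜] 𝕜)) : 0 ≤ supNormProd f :=
  (norm_nonneg _).trans (norm_prod_apply_le_supNormProd f (x := 0) (by simp))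

lemma bddBelow_unitSupNormProds : BddBelow (unitSupNormProds 𝕜 E n) :=
  ⟨0, by rintro _ ⟨f, -, rfl⟩; exact supNormProd_nonneg f⟩

lemma supNormProd_pos {f : Fin n → (E →L[𝕜] 𝕜)} (hf : ∀ j, f j ≠ 0) : 0 < supNormProd f := by
  obtain ⟨x, hx⟩ := Module.Dual.exists_forall_ne_zero_of_forall_exists
    (fun j ↦ (f j : E →ₗ[𝕜] 𝕜)) fun j ↦ by simpa [DFunLike.ne_iff] using hf j
  set r : ℝ := (‖x‖ + 1)⁻¹
  have hr : 0 < r := by positivity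
  have hrx : ‖(r : 𝕜) • x‖ ≤ 1 := by
    rw [norm_smul, RCLike.norm_ofReal, abs_of_pos hr, inv_mul_le_one₀ (by positivity)]
    linarith
  refine (norm_pos_iff.2 ?_).trans_le (norm_prod_apply_le_supNormProd f hrx)
  refine Finset.prod_ne_zero_iff.2 fun j _ ↦ ?_
  rw [map_smul, smul_eq_mul]
  exact mul_ne_zero (RCLike.ofReal_ne_zero.2 hr.ne') (hx j)

section Lift

variable {P : E →L[𝕜] F}

lemma norm_comp_eq_of_lift (hP : ‖P‖ ≤ 1) (hlift : ∀ y, ∃ x, P x = y ∧ ‖x‖ ≤ ‖y‖)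
    (g : F →L[𝕜] 𝕜) : ‖g.comp P‖ = ‖g‖ := by
  refine le_antisymm ((g.opNorm_comp_le P).trans (mul_le_of_le_one_right (norm_nonneg _) hP))
    (g.opNorm_le_bound (norm_nonneg _) fun y ↦ ?_)
  obtain ⟨x, rfl, hx⟩ := hlift y
  exact (g.comp P).le_opNorm x |>.trans (by gcongr)

lemma supNormProd_comp_eq_of_lift (hP : ‖P‖ ≤ 1) (hlift : ∀ y, ∃ x, P x = y ∧ ‖x‖ ≤ ‖y‖)
    (g : Fin n → (F →L[𝕜] 𝕜)) : supNormProd (fun j ↦ (g j).comp P) = supNormProd g := by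
  unfold supNormProd
  congr 1
  ext t
  constructor
  · rintro ⟨x, hx, rfl⟩
    exact ⟨P x, P.le_of_opNorm_le_of_le hP hx |>.trans_eq (one_mul _), rfl⟩
  · rintro ⟨y, hy, rfl⟩
    obtain ⟨x, rfl, hx⟩ := hlift y
    exact ⟨x, hx.trans hy, rfl⟩

lemma supNormProd_mem_unitSupNormProds_of_lift (hP : ‖P‖ ≤ 1)
    (hlift : ∀ y, ∃ x, P x = y ∧ ‖x‖ ≤ ‖y‖) {f : Fin n → (E →L[𝕜] 𝕜)} (hf : ∀ j, ‖f j‖ = 1)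
    {g : Fin n → (F →L[𝕜] 𝕜)} (hfg : ∀ j, f j = (g j).comp P) :
    supNormProd f ∈ unitSupNormProds 𝕜 F n := by
  obtain rfl : f = fun j ↦ (g j).comp P := funext hfg
  exact ⟨g, fun j ↦ (norm_comp_eq_of_lift hP hlift (g j)).symm.trans (hf j),
    supNormProd_comp_eq_of_lift hP hlift g⟩

lemma unitSupNormProds_subset_of_lift (hP : ‖P‖ ≤ 1) (hlift : ∀ y, ∃ x, P x = y ∧ ‖x‖ ≤ ‖y‖) :
    unitSupNormProds 𝕜 F n ⊆ unitSupNormProds 𝕜 E n := by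
  rintro _ ⟨g, hg, rfl⟩
  exact ⟨fun j ↦ (g j).comp P, fun j ↦ (norm_comp_eq_of_lift hP hlift (g j)).trans (hg j),
    (supNormProd_comp_eq_of_lift hP hlift g).symm⟩

end Lift

section FiniteDimensional

variable [FiniteDimensional 𝕜 E]

lemma continuous_supNormProd : Continuous (supNormProd : (Fin n → (E →L[𝕜] 𝕜)) → ℝ) := by
  have hsup : (supNormProd : (Fin n → (E →L[𝕜] 𝕜)) → ℝ) =
      fun f ↦ sSup ((fun x ↦ ‖∏ j, f j x‖) '' Metric.closedBall 0 1) := by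
    funext f
    unfold supNormProd
    congr 1
    ext t
    simp [eq_comm]
  have := FiniteDimensional.proper_rclike 𝕜 E
  rw [hsup]
  exact (isCompact_closedBall 0 1).continuous_sSup (by fun_prop)

lemma sInf_unitSupNormProds_pos (h : (unitSupNormProds 𝕜 E n).Nonempty) :
    0 < sInf (unitSupNormProds 𝕜 E n) := by
  have : ProperSpace (E →L[𝕜] 𝕜) := FiniteDimensional.proper_rclike 𝕜 _
  set K := univ.pi fun _ : Fin n ↦ Metric.sphere (0 : E →L[𝕜] 𝕜) 1
  have himage : unitSupNormProds 𝕜 E n = supNormProd '' K := by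
    ext y
    simp only [K, unitSupNormProds, mem_image, mem_univ_pi, mem_sphere_zero_iff_norm]
    exact exists_congr fun f ↦ and_congr_right fun _ ↦ eq_comm
  have hK : IsCompact K := isCompact_univ_pi fun _ ↦ isCompact_sphere _ _
  rw [himage] at h ⊢
  obtain ⟨f, hf, hmin⟩ := (hK.image continuous_supNormProd).sInf_mem h
  rw [← hmin]
  exact supNormProd_pos fun j ↦ norm_ne_zero_iff.1 <| by
    rw [mem_sphere_zero_iff_norm.1 (hf j (mem_univ j))]
    exact one_ne_zero

end FiniteDimensional

end NormedSpace

section InnerProductSpace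

variable {𝕜 X : Type*} [RCLike 𝕜] [NormedAddCommGroup X] [InnerProductSpace 𝕜 X] {n : ℕ}

lemma exists_orthogonalProjectionOnto_eq_of_norm_le (K : Submodule 𝕜 X)
    [K.HasOrthogonalProjection] (y : K) : ∃ x, K.orthogonalProjectionOnto x = y ∧ ‖x‖ ≤ ‖y‖ :=
  ⟨y, K.orthogonalProjectionOnto_mem_subspace_eq_self y, le_rfl⟩

lemma unitSupNormProds_subset (K : Submodule 𝕜 X) [K.HasOrthogonalProjection] :
    unitSupNormProds 𝕜 K n ⊆ unitSupNormProds 𝕜 X n :=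
  unitSupNormProds_subset_of_lift K.orthogonalProjectionOnto_norm_le
    (exists_orthogonalProjectionOnto_eq_of_norm_le K)

lemma exists_finrank_le_supNormProd_mem [CompleteSpace X] {f : Fin n → (X →L[𝕜] 𝕜)}
    (hf : ∀ j, ‖f j‖ = 1) :
    ∃ K : Submodule 𝕜 X, FiniteDimensional 𝕜 K ∧ Module.finrank 𝕜 K ≤ n ∧
      supNormProd f ∈ unitSupNormProds 𝕜 K n := by
  set v := fun j ↦ (InnerProductSpace.toDual 𝕜 X).symm (f j)
  set K := Submodule.span 𝕜 (range v)
  have hK : FiniteDimensional 𝕜 K := FiniteDimensional.span_of_finite 𝕜 (finite_range v)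
  have hfactor : ∀ j, f j = ((f j).comp K.subtypeL).comp K.orthogonalProjectionOnto := by
    intro j
    ext x
    have hv : v j ∈ K := Submodule.subset_span (mem_range_self j)
    simp only [ContinuousLinearMap.comp_apply, Submodule.subtypeL_apply]
    rw [← InnerProductSpace.toDual_symm_apply (x := x), ← InnerProductSpace.toDual_symm_apply]
    exact (K.inner_orthogonalProjectionOnto_eq_of_mem_left ⟨v j, hv⟩ x).symm
  exact ⟨K, hK, (finrank_range_le_card v).trans (by simp),
    supNormProd_mem_unitSupNormProds_of_lift K.orthogonalProjectionOnto_norm_le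
      (exists_orthogonalProjectionOnto_eq_of_norm_le K) hf hfactor⟩

end InnerProductSpace

theorem polarizationConst_eq_sup_finiteDim_general {𝕜 X : Type*} [RCLike 𝕜] [NormedAddCommGroup X]
    [InnerProductSpace 𝕜 X] [CompleteSpace X] (n : ℕ) :
    polarizationConst 𝕜 X n =
      sSup {c : ℝ | ∃ Y : Submodule 𝕜 X, IsClosed (Y : Set X) ∧
        Module.finrank 𝕜 Y ≤ n ∧ c = polarizationConst 𝕜 Y n} := by
  simp only [polarizationConst_eq_inv_sInf, ← and_assoc]
  refine inv_sInf_eq_sSup_inv_sInf (fun Y ⟨hY, _⟩ ↦ ?_) ?_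
  · have : CompleteSpace Y := hY.completeSpace_coe
    exact unitSupNormProds_subset Y
  · rintro _ ⟨f, hf, rfl⟩
    obtain ⟨Y, hfin, hrank, hmem⟩ := exists_finrank_le_supNormProd_mem hf
    exact ⟨Y, ⟨Y.closed_of_finiteDimensional, hrank⟩, sInf_unitSupNormProds_pos ⟨_, hmem⟩,
      csInf_le bddBelow_unitSupNormProds hmem⟩

/-- For a Hilbert space `X`, `cₙ(X) = sup { cₙ(Y) : Y ≤ X closed, dim Y ≤ n }`. -/
theorem polarizationConst_eq_sup_finiteDim {𝕜 X : Type*} [RCLike 𝕜] [NormedAddCommGroup X]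
    [InnerProductSpace 𝕜 X] [CompleteSpace X] [Nontrivial X] (n : ℕ) :
    polarizationConst 𝕜 X n =
      sSup {c : ℝ | ∃ Y : Submodule 𝕜 X, IsClosed (Y : Set X) ∧
        Module.finrank 𝕜 Y ≤ n ∧ c = polarizationConst 𝕜 Y n} :=
  polarizationConst_eq_sup_finiteDim_general n
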